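/- Let f : ℝ² → ℝ be a real analytic function satisfying f(p+nq, q) = f(p,q) for all n ∈ ℤ. Then f depends only on the variable q, i.e., f(p,q) = f(0,q) for all (p,q). -/
import Mathlib


/-- A real analytic `G`-invariant function on `ℝ²` depends only on `q`. -/
theorem stmt2 (f : ℝ × ℝ → ℝ) (hf : AnalyticOnNhd ℝ f Set.univ)
    (hinv : ∀ (n : ℤ) (p q : ℝ), f (p + n * q, q) = f (p, q)) :
    ∀ p q : ℝ, f (p, q) = f (0, q) := by
  intro p q
  rcases eq_or_ne p 0 with rfl | hp
  · rfl
  · -- g q = f (p, q) - f (0, q) is analytic and vanishes at p/n → 0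
    set g : ℝ → ℝ := fun q => f (p, q) - f (0, q) with hg
    have hga : AnalyticOnNhd ℝ g Set.univ := by
      have h1 : AnalyticOnNhd ℝ (fun q : ℝ => f (p, q)) Set.univ := by
        intro x _
        exact (hf (p, x) trivial).comp (analyticAt_const.prod analyticAt_id)
      have h2 : AnalyticOnNhd ℝ (fun q : ℝ => f (0, q)) Set.univ := by
        intro x _
        exact (hf ((0:ℝ), x) trivial).comp (analyticAt_const.prod analyticAt_id)
      exact fun x hx => (h1 x hx).sub (h2 x hx)
    have hzero : ∀ n : ℕ, g (p / (n + 1)) = 0 := by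
      intro n
      have hn : ((n : ℝ) + 1) ≠ 0 := by positivity
      have h := hinv (n + 1) 0 (p / (n + 1))
      push_cast at h
      rw [zero_add] at h
      have e : ((n : ℝ) + 1) * (p / ((n : ℝ) + 1)) = p := by field_simp
      rw [e] at h
      simp only [hg]
      rw [sub_eq_zero]
      exact h
    have htend : Filter.Tendsto (fun n : ℕ => p / (n + 1)) Filter.atTop (nhdsWithin 0 {(0:ℝ)}ᶜ) := by
      refine tendsto_nhdsWithin_of_tendsto_nhds_of_eventually_within _ ?_ ?_
      · have : Filter.Tendsto (fun n : ℕ => ((n : ℝ) + 1)) Filter.atTop Filter.atTop :=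
          Filter.tendsto_atTop_add_const_right _ 1 tendsto_natCast_atTop_atTop
        simpa using Filter.Tendsto.const_div_atTop this p
      · filter_upwards with n
        have hn : ((n : ℝ) + 1) ≠ 0 := by positivity
        exact div_ne_zero hp hn
    have hfreq : ∃ᶠ z in nhdsWithin 0 {(0:ℝ)}ᶜ, g z = 0 :=
      htend.frequently (Filter.Frequently.of_forall hzero)
    have := hga.eqOn_zero_of_preconnected_of_frequently_eq_zero
      isPreconnected_univ (Set.mem_univ 0) hfreq (Set.mem_univ q)
    have hgq : g q = 0 := this
    simpa [hg, sub_eq_zero] using hgq
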